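/- Let Δ := (τ, δ) be a filter that is derivation neutral (DN) for a rule r := H ← c ◇ B. If ⟨B | c⟩ is Δ-more general than ⟨H | c⟩, then ⟨H | c⟩ loops with respect to {r}. -/

import Mathlib

/- A formalization of binary CLP(C): terms, constraints, queries, rules,
   derivation steps, loops, projections, filters, DN / DNlog / DNsyn. -/

namespace CLP

/-- First-order terms over a signature of function symbols `F` with arities `arF`. -/
inductive Tm (F : Type) (arF : F → ℕ) : Type
  | var : ℕ → Tm F arF
  | app : (f : F) → (Fin (arF f) → Tm F arF) → Tm F arF

variable {F : Type} {arF : F → ℕ} {Pc : Type} {arP : Pc → ℕ}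
  {Prd : Type} {arPrd : Prd → ℕ} {D : Type}

/-- Variables of a term. -/
def Tm.fv : Tm F arF → Finset ℕ
  | .var x => {x}
  | .app _ ts => Finset.univ.biUnion fun i => (ts i).fv

/-- Apply a variable substitution to a term. -/
def Tm.rename (σ : ℕ → ℕ) : Tm F arF → Tm F arF
  | .var x => .var (σ x)
  | .app f ts => .app f fun i => (ts i).rename σ

/-- Finite conjunctions of primitive constraints (including equality). -/
inductive Con (F : Type) (arF : F → ℕ) (Pc : Type) (arP : Pc → ℕ) : Type
  | tru : Con F arF Pc arP
  | eq : Tm F arF → Tm F arF → Con F arF Pc arP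
  | prim : (c : Pc) → (Fin (arP c) → Tm F arF) → Con F arF Pc arP
  | and : Con F arF Pc arP → Con F arF Pc arP → Con F arF Pc arP

/-- Variables of a constraint. -/
def Con.fv : Con F arF Pc arP → Finset ℕ
  | .tru => ∅
  | .eq s t => s.fv ∪ t.fv
  | .prim _ ts => Finset.univ.biUnion fun i => (ts i).fv
  | .and c d => c.fv ∪ d.fv

/-- Apply a variable substitution to a constraint. -/
def Con.rename (σ : ℕ → ℕ) : Con F arF Pc arP → Con F arF Pc arP
  | .tru => .tru
  | .eq s t => .eq (s.rename σ) (t.rename σ)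
  | .prim c ts => .prim c fun i => (ts i).rename σ
  | .and c d => .and (c.rename σ) (d.rename σ)

/-- The domain of computation `D_C`: an interpretation of the function and
constraint-predicate symbols over a domain `D`. -/
structure Interp (F : Type) (arF : F → ℕ) (Pc : Type) (arP : Pc → ℕ) (D : Type) where
  fn : (f : F) → (Fin (arF f) → D) → D
  pr : (c : Pc) → (Fin (arP c) → D) → Prop

/-- Evaluation of a term under a valuation `v : Var → D`. -/
def Tm.eval (If : (f : F) → (Fin (arF f) → D) → D) (v : ℕ → D) : Tm F arF → D
  | .var x => v x
  | .app f ts => If f fun i => (ts i).eval If v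

/-- `D_C ⊨_v c`. -/
def Con.Sat (I : Interp F arF Pc arP D) (v : ℕ → D) : Con F arF Pc arP → Prop
  | .tru => True
  | .eq s t => s.eval I.fn v = t.eval I.fn v
  | .prim c ts => I.pr c fun i => (ts i).eval I.fn v
  | .and c d => c.Sat I v ∧ d.Sat I v

/-- A query `⟨p(t̃) | d⟩`. -/
structure Query (F : Type) (arF : F → ℕ) (Pc : Type) (arP : Pc → ℕ)
    (Prd : Type) (arPrd : Prd → ℕ) where
  p : Prd
  args : Fin (arPrd p) → Tm F arF
  con : Con F arF Pc arP

/-- Variables of a query. -/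
def Query.fv (S : Query F arF Pc arP Prd arPrd) : Finset ℕ :=
  (Finset.univ.biUnion fun i => (S.args i).fv) ∪ S.con.fv

/-- Apply a variable substitution to a query. -/
def Query.rename (σ : ℕ → ℕ) (S : Query F arF Pc arP Prd arPrd) :
    Query F arF Pc arP Prd arPrd :=
  ⟨S.p, fun i => (S.args i).rename σ, S.con.rename σ⟩

/-- The set `[S]` of atoms (predicate applied to domain values) described by a query `S`. -/
def Query.set (I : Interp F arF Pc arP D) (S : Query F arF Pc arP Prd arPrd) :
    Set (Σ p : Prd, Fin (arPrd p) → D) :=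
  { a | ∃ v : ℕ → D, S.con.Sat I v ∧ a = ⟨S.p, fun i => (S.args i).eval I.fn v⟩ }

/-- `S'` is more general than `S` iff `[S] ⊆ [S']`. -/
def MoreGen (I : Interp F arF Pc arP D) (S' S : Query F arF Pc arP Prd arPrd) : Prop :=
  S.set I ⊆ S'.set I

/-- A binary rule `p(s̃) ← c ◇ q(t̃)`. -/
structure Rule (F : Type) (arF : F → ℕ) (Pc : Type) (arP : Pc → ℕ)
    (Prd : Type) (arPrd : Prd → ℕ) where
  hp : Prd
  hargs : Fin (arPrd hp) → Tm F arF
  con : Con F arF Pc arP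
  bp : Prd
  bargs : Fin (arPrd bp) → Tm F arF

/-- Variables of a rule. -/
def Rule.fv (r : Rule F arF Pc arP Prd arPrd) : Finset ℕ :=
  (Finset.univ.biUnion fun i => (r.hargs i).fv) ∪ r.con.fv ∪
    (Finset.univ.biUnion fun i => (r.bargs i).fv)

/-- Apply a variable substitution to a rule. -/
def Rule.rename (σ : ℕ → ℕ) (r : Rule F arF Pc arP Prd arPrd) : Rule F arF Pc arP Prd arPrd :=
  ⟨r.hp, fun i => (r.hargs i).rename σ, r.con.rename σ, r.bp, fun i => (r.bargs i).rename σ⟩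

/-- `r'` is a variant of `r`: obtained by renaming the variables by a bijection. -/
def Rule.IsVariant (r r' : Rule F arF Pc arP Prd arPrd) : Prop :=
  ∃ ρ : ℕ ≃ ℕ, r' = r.rename ρ

/-- The query `⟨H | c⟩` of a rule `H ← c ◇ B`. -/
def Rule.headQuery (r : Rule F arF Pc arP Prd arPrd) : Query F arF Pc arP Prd arPrd :=
  ⟨r.hp, r.hargs, r.con⟩

/-- The query `⟨B | c⟩` of a rule `H ← c ◇ B`. -/
def Rule.bodyQuery (r : Rule F arF Pc arP Prd arPrd) : Query F arF Pc arP Prd arPrd :=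
  ⟨r.bp, r.bargs, r.con⟩

/-- The constraint `ũ = w̃` for two sequences of terms. -/
def argsEqCon {n : ℕ} (u w : Fin n → Tm F arF) : Con F arF Pc arP :=
  (List.ofFn fun i => Con.eq (u i) (w i)).foldr .and .tru

/-- The constraint `s̃' = ũ ∧ c' ∧ d` of the query resulting from a derivation step of
`S = ⟨p(ũ) | d⟩` with input rule `r' = p(s̃') ← c' ◇ q(t̃')`. -/
def stepCon (r' : Rule F arF Pc arP Prd arPrd) (S : Query F arF Pc arP Prd arPrd)
    (h : r'.hp = S.p) : Con F arF Pc arP :=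
  Con.and
    (argsEqCon (fun i : Fin (arPrd S.p) => r'.hargs (Fin.cast (congrArg arPrd h).symm i)) S.args)
    (Con.and r'.con S.con)

/-- Derivation step of `S` using the (already renamed-apart) input rule `r'`:
the constraint `s̃' = ũ ∧ c' ∧ d` must be satisfiable in `D_C`, and the resulting
query is `⟨q(t̃') | s̃' = ũ ∧ c' ∧ d⟩`. -/
def StepWith (I : Interp F arF Pc arP D) (r' : Rule F arF Pc arP Prd arPrd)
    (S T : Query F arF Pc arP Prd arPrd) : Prop :=
  ∃ h : r'.hp = S.p, (∃ v : ℕ → D, (stepCon r' S h).Sat I v) ∧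
    T = ⟨r'.bp, r'.bargs, stepCon r' S h⟩

/-- Derivation step `S ⟹_r T`: there is a variant `r'` of `r`, variable disjoint
with `S`, which is an input rule for a step from `S` to `T`. -/
def Step (I : Interp F arF Pc arP D) (r : Rule F arF Pc arP Prd arPrd)
    (S T : Query F arF Pc arP Prd arPrd) : Prop :=
  ∃ r' : Rule F arF Pc arP Prd arPrd,
    r.IsVariant r' ∧ Disjoint r'.fv S.fv ∧ StepWith I r' S T

/-- `S₀` loops w.r.t. the program `P`: there is an infinite derivation of `P ∪ {S₀}`,
i.e. an infinite sequence of derivation steps whose input rules are variants of rules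
of `P`, variable disjoint from `S₀` and from the input rules used at earlier steps
(standardization apart). -/
def Loops (I : Interp F arF Pc arP D) (P : Set (Rule F arF Pc arP Prd arPrd))
    (S₀ : Query F arF Pc arP Prd arPrd) : Prop :=
  ∃ (S : ℕ → Query F arF Pc arP Prd arPrd) (rv : ℕ → Rule F arF Pc arP Prd arPrd),
    S 0 = S₀ ∧
    ∀ n : ℕ, (∃ r ∈ P, r.IsVariant (rv n)) ∧
      Disjoint (rv n).fv S₀.fv ∧ (∀ m < n, Disjoint (rv n).fv (rv m).fv) ∧
      StepWith I (rv n) (S n) (S (n + 1))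

/-! ## Sets of positions, projections, filters -/

/-- The set `[S|τ]` of projected atoms described by the projection of a query on a
set of positions `τ`. -/
def Query.projSet (I : Interp F arF Pc arP D) (τ : ∀ p : Prd, Set (Fin (arPrd p)))
    (S : Query F arF Pc arP Prd arPrd) :
    Set (Σ p : Prd, {i : Fin (arPrd p) // i ∈ τ p} → D) :=
  { a | ∃ v : ℕ → D, S.con.Sat I v ∧ a = ⟨S.p, fun i => (S.args i.1).eval I.fn v⟩ }

/-- The complement `τ̄` of a set of positions. -/
def complPos (τ : ∀ p : Prd, Set (Fin (arPrd p))) : ∀ p : Prd, Set (Fin (arPrd p)) :=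
  fun p => (τ p)ᶜ

/-- A query over a projected predicate `p|τ`. -/
structure PQuery (F : Type) (arF : F → ℕ) (Pc : Type) (arP : Pc → ℕ)
    {Prd : Type} {arPrd : Prd → ℕ} (τ : ∀ p : Prd, Set (Fin (arPrd p))) (p : Prd) where
  args : {i : Fin (arPrd p) // i ∈ τ p} → Tm F arF
  con : Con F arF Pc arP

/-- The set of projected atoms described by a projected query. -/
def PQuery.set (I : Interp F arF Pc arP D) {τ : ∀ p : Prd, Set (Fin (arPrd p))} {p : Prd}
    (Q : PQuery F arF Pc arP τ p) :
    Set (Σ q : Prd, {i : Fin (arPrd q) // i ∈ τ q} → D) :=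
  { a | ∃ v : ℕ → D, Q.con.Sat I v ∧ a = ⟨p, fun i => (Q.args i).eval I.fn v⟩ }

/-- A filter `Δ = (τ, δ)`: a set of positions together with, for each predicate `p`,
a query `δ(p)` over the projected predicate `p|τ` with satisfiable constraint. -/
structure Filt {F : Type} {arF : F → ℕ} {Pc : Type} {arP : Pc → ℕ} {D : Type}
    (I : Interp F arF Pc arP D) (Prd : Type) (arPrd : Prd → ℕ) where
  τ : ∀ p : Prd, Set (Fin (arPrd p))
  δ : ∀ p : Prd, PQuery F arF Pc arP τ p
  δ_sat : ∀ p : Prd, ∃ v : ℕ → D, (δ p).con.Sat I v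

variable {I : Interp F arF Pc arP D}

/-- A query `S` satisfies the filter `Δ` iff `[S|τ] ⊆ [δ(rel(S))]`. -/
def Filt.Satisfies (Δ : Filt I Prd arPrd) (S : Query F arF Pc arP Prd arPrd) : Prop :=
  S.projSet I Δ.τ ⊆ (Δ.δ S.p).set I

/-- `S'` is `Δ`-more general than `S`: `S'|τ̄` is more general than `S|τ̄`
and `S'` satisfies `Δ`. -/
def Filt.DeltaMoreGen (Δ : Filt I Prd arPrd) (S' S : Query F arF Pc arP Prd arPrd) : Prop :=
  S.projSet I (complPos Δ.τ) ⊆ S'.projSet I (complPos Δ.τ) ∧ Δ.Satisfies S'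

/-- `Δ` is derivation neutral (DN) for `r`. -/
def Filt.DN (Δ : Filt I Prd arPrd) (r : Rule F arF Pc arP Prd arPrd) : Prop :=
  ∀ S T, Step I r S T → ∀ S', Δ.DeltaMoreGen S' S →
    ∃ T', Step I r S' T' ∧ Δ.DeltaMoreGen T' T

/-! ## Normalized rules and DNlog -/

/-- A normalized rule `p(X̃) ← c ◇ q(Ỹ)` where `X̃, Ỹ` are disjoint sequences of
distinct variables. -/
structure NRule (F : Type) (arF : F → ℕ) (Pc : Type) (arP : Pc → ℕ)
    (Prd : Type) (arPrd : Prd → ℕ) where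
  hp : Prd
  X : Fin (arPrd hp) → ℕ
  bp : Prd
  Y : Fin (arPrd bp) → ℕ
  hX : Function.Injective X
  hY : Function.Injective Y
  hXY : ∀ i j, X i ≠ Y j
  con : Con F arF Pc arP

/-- The underlying rule of a normalized rule. -/
def NRule.toRule (r : NRule F arF Pc arP Prd arPrd) : Rule F arF Pc arP Prd arPrd :=
  ⟨r.hp, fun i => .var (r.X i), r.con, r.bp, fun i => .var (r.Y i)⟩

/-- `local_var(r) = Var(c) ∖ (Var(X̃) ∪ Var(Ỹ))`. -/
def NRule.localVar (r : NRule F arF Pc arP Prd arPrd) : Set ℕ :=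
  ↑r.con.fv \ (Set.range r.X ∪ Set.range r.Y)

/-- `v` and `w` agree on all variables outside `W`. -/
def agreesOff (W : Set ℕ) (v w : ℕ → D) : Prop := ∀ x ∉ W, v x = w x

/-- Semantics under `v` of the formula `sat(s̃, Q) = ∃_{Var(Q')} (s̃ = ũ' ∧ d')`,
`Q'` a variable-disjoint variant of `Q = ⟨p|τ(ũ) | d⟩`. -/
def satFor (I : Interp F arF Pc arP D) {τ : ∀ p : Prd, Set (Fin (arPrd p))} {p : Prd}
    (s : {i : Fin (arPrd p) // i ∈ τ p} → Tm F arF) (Q : PQuery F arF Pc arP τ p)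
    (v : ℕ → D) : Prop :=
  ∃ w : ℕ → D, Q.con.Sat I w ∧ ∀ i, (s i).eval I.fn v = (Q.args i).eval I.fn w

/-- `Δ` is DNlog for a normalized rule `r = p(X̃) ← c ◇ q(Ỹ)`:
`D_C ⊨ c → ∀_{X̃|τ} [ sat(X̃|τ, δ(p)) → ∃_Y (sat(Ỹ|τ, δ(q)) ∧ c) ]` where
`Y = Var(Ỹ|τ) ∪ local_var(r)`. -/
def Filt.DNlog (Δ : Filt I Prd arPrd) (r : NRule F arF Pc arP Prd arPrd) : Prop :=
  ∀ v : ℕ → D, r.con.Sat I v →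
    ∀ v₁ : ℕ → D, agreesOff (r.X '' Δ.τ r.hp) v₁ v →
      satFor I (fun i => Tm.var (r.X i.1)) (Δ.δ r.hp) v₁ →
        ∃ v₂ : ℕ → D,
          agreesOff (r.Y '' Δ.τ r.bp ∪ r.localVar) v₂ v₁ ∧
          satFor I (fun i => Tm.var (r.Y i.1)) (Δ.δ r.bp) v₂ ∧ r.con.Sat I v₂

/-! ## Flat rules and DNsyn -/

/-- Variables of a sequence of terms. -/
def varsOf {n : ℕ} (s : Fin n → Tm F arF) : Finset ℕ :=
  Finset.univ.biUnion fun i => (s i).fv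

/-- Variables of the projection of a sequence of terms on a set of positions. -/
def varsOfProj {n : ℕ} (σ : Set (Fin n)) (s : Fin n → Tm F arF) : Set ℕ :=
  ⋃ i : {i : Fin n // i ∈ σ}, ↑(s i.1).fv

/-- A flat rule `p(X̃) ← (X̃ = s̃ ∧ Ỹ = t̃) ◇ q(Ỹ)` with `Var(s̃, t̃)` local. -/
structure FlatRule (F : Type) (arF : F → ℕ) (Pc : Type) (arP : Pc → ℕ)
    (Prd : Type) (arPrd : Prd → ℕ) extends NRule F arF Pc arP Prd arPrd where
  s : Fin (arPrd hp) → Tm F arF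
  t : Fin (arPrd bp) → Tm F arF
  con_eq : con = Con.and (argsEqCon (fun i => Tm.var (X i)) s)
                         (argsEqCon (fun i => Tm.var (Y i)) t)
  local_args : ∀ x ∈ varsOf s ∪ varsOf t, x ∉ Set.range X ∪ Set.range Y

/-! ## The constraint domain Term (logic programming) -/

/-- Finite trees (ground terms) over `F`. -/
inductive GTm (F : Type) (arF : F → ℕ) : Type
  | app : (f : F) → (Fin (arF f) → GTm F arF) → GTm F arF

/-- Arities for the empty set of constraint-predicate symbols (only `=` is available). -/
def emptyAr : Empty → ℕ := fun c => c.elim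

/-- The domain of computation of the constraint domain `Term`: the algebra of
finite trees, with no primitive constraints but equality. -/
def termInterp (F : Type) (arF : F → ℕ) : Interp F arF Empty emptyAr (GTm F arF) :=
  ⟨fun f ts => GTm.app f ts, fun c => c.elim⟩

end CLP

/-!
Unfolding `r` once from `⟨H | c⟩` with a fresh variant of `r` yields a query `T₀`
describing the same atoms as `⟨B | c⟩`; since `⟨B | c⟩` is `Δ`-more general than
`⟨H | c⟩`, so is `T₀`. Derivation neutrality applied to the step `⟨H | c⟩ ⟹ T₀` then
shows that every query `Δ`-more general than `⟨H | c⟩` has a successor that is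
`Δ`-more general than `T₀`, hence than `⟨H | c⟩`. The invariant "equal to, or
`Δ`-more general than, `⟨H | c⟩`" is therefore preserved by some derivation step,
and renaming the input rules apart produces an infinite derivation.
-/

namespace CLP

variable {F : Type} {arF : F → ℕ} {Pc : Type} {arP : Pc → ℕ}
  {Prd : Type} {arPrd : Prd → ℕ} {D : Type} {I : Interp F arF Pc arP D}

theorem Tm.fv_subset_app (f : F) (ts : Fin (arF f) → Tm F arF) (i : Fin (arF f)) :
    (ts i).fv ⊆ (Tm.app f ts).fv :=
  Finset.subset_biUnion_of_mem (fun i => (ts i).fv) (Finset.mem_univ i)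

theorem Tm.eval_rename (If : (f : F) → (Fin (arF f) → D) → D) (σ : ℕ → ℕ) (v : ℕ → D)
    (t : Tm F arF) : (t.rename σ).eval If v = t.eval If (v ∘ σ) := by
  induction t with
  | var x => rfl
  | app f ts ih => simp only [Tm.rename, Tm.eval, ih]

theorem Tm.eval_congr (If : (f : F) → (Fin (arF f) → D) → D) {v w : ℕ → D} (t : Tm F arF)
    (h : ∀ x ∈ t.fv, v x = w x) : t.eval If v = t.eval If w := by
  induction t with
  | var x => exact h x (Finset.mem_singleton_self x)
  | app f ts ih =>
    simp only [Tm.eval]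
    congr 1
    funext i
    exact ih i fun x hx => h x (Tm.fv_subset_app f ts i hx)

theorem Tm.rename_eq_self {σ : ℕ → ℕ} (t : Tm F arF) (h : ∀ x ∈ t.fv, σ x = x) :
    t.rename σ = t := by
  induction t with
  | var x => rw [Tm.rename, h x (Finset.mem_singleton_self x)]
  | app f ts ih =>
    simp only [Tm.rename, Tm.app.injEq, heq_eq_eq, true_and]
    funext i
    exact ih i fun x hx => h x (Tm.fv_subset_app f ts i hx)

theorem Tm.fv_rename (σ : ℕ → ℕ) (t : Tm F arF) : (t.rename σ).fv = t.fv.image σ := by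
  induction t with
  | var x => simp [Tm.rename, Tm.fv]
  | app f ts ih => simp only [Tm.rename, Tm.fv, ih, Finset.biUnion_image]

theorem Tm.rename_rename (σ σ' : ℕ → ℕ) (t : Tm F arF) :
    (t.rename σ).rename σ' = t.rename (σ' ∘ σ) := by
  induction t with
  | var x => rfl
  | app f ts ih => simp only [Tm.rename, ih]

theorem Con.sat_rename (σ : ℕ → ℕ) (v : ℕ → D) (c : Con F arF Pc arP) :
    (c.rename σ).Sat I v ↔ c.Sat I (v ∘ σ) := by
  induction c with
  | tru => rfl
  | eq s t => simp only [Con.rename, Con.Sat, Tm.eval_rename]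
  | prim c ts => simp only [Con.rename, Con.Sat, Tm.eval_rename]
  | and c d ihc ihd => simp only [Con.rename, Con.Sat, ihc, ihd]

theorem Con.sat_congr {v w : ℕ → D} (c : Con F arF Pc arP) (h : ∀ x ∈ c.fv, v x = w x) :
    c.Sat I v ↔ c.Sat I w := by
  induction c with
  | tru => rfl
  | eq s t =>
    simp only [Con.Sat]
    rw [Tm.eval_congr I.fn s fun x hx => h x (by simp [Con.fv, hx]),
      Tm.eval_congr I.fn t fun x hx => h x (by simp [Con.fv, hx])]
  | prim c ts =>
    simp only [Con.Sat]
    congr! 2 with i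
    exact Tm.eval_congr I.fn _ fun x hx =>
      h x (Finset.subset_biUnion_of_mem _ (Finset.mem_univ i) hx)
  | and c d ihc ihd =>
    simp only [Con.Sat]
    rw [ihc fun x hx => h x (by simp [Con.fv, hx]), ihd fun x hx => h x (by simp [Con.fv, hx])]

theorem Con.rename_eq_self {σ : ℕ → ℕ} (c : Con F arF Pc arP) (h : ∀ x ∈ c.fv, σ x = x) :
    c.rename σ = c := by
  induction c with
  | tru => rfl
  | eq s t =>
    rw [Con.rename, Tm.rename_eq_self s fun x hx => h x (by simp [Con.fv, hx]),
      Tm.rename_eq_self t fun x hx => h x (by simp [Con.fv, hx])]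
  | prim c ts =>
    simp only [Con.rename, Con.prim.injEq, heq_eq_eq, true_and]
    funext i
    exact Tm.rename_eq_self _ fun x hx =>
      h x (Finset.subset_biUnion_of_mem _ (Finset.mem_univ i) hx)
  | and c d ihc ihd =>
    rw [Con.rename, ihc fun x hx => h x (by simp [Con.fv, hx]),
      ihd fun x hx => h x (by simp [Con.fv, hx])]

theorem Con.fv_rename (σ : ℕ → ℕ) (c : Con F arF Pc arP) : (c.rename σ).fv = c.fv.image σ := by
  induction c with
  | tru => rfl
  | eq s t => simp only [Con.rename, Con.fv, Tm.fv_rename, Finset.image_union]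
  | prim c ts => simp only [Con.rename, Con.fv, Tm.fv_rename, Finset.biUnion_image]
  | and c d ihc ihd => simp only [Con.rename, Con.fv, ihc, ihd, Finset.image_union]

theorem Con.rename_rename (σ σ' : ℕ → ℕ) (c : Con F arF Pc arP) :
    (c.rename σ).rename σ' = c.rename (σ' ∘ σ) := by
  induction c with
  | tru => rfl
  | eq s t => simp only [Con.rename, Tm.rename_rename]
  | prim c ts => simp only [Con.rename, Tm.rename_rename]
  | and c d ihc ihd => simp only [Con.rename, ihc, ihd]

theorem argsEqCon_sat {n : ℕ} (u w : Fin n → Tm F arF) (v : ℕ → D) :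
    (argsEqCon u w : Con F arF Pc arP).Sat I v ↔ ∀ i, (u i).eval I.fn v = (w i).eval I.fn v := by
  induction n with
  | zero => simp [argsEqCon, Con.Sat]
  | succ m ih =>
    simp only [argsEqCon, List.ofFn_succ, List.foldr_cons, Con.Sat, Fin.forall_fin_succ]
    exact and_congr_right' (ih (fun i => u i.succ) (fun i => w i.succ))

theorem argsEqCon_rename {n : ℕ} (σ : ℕ → ℕ) (u w : Fin n → Tm F arF) :
    (argsEqCon u w : Con F arF Pc arP).rename σ =
      argsEqCon (fun i => (u i).rename σ) (fun i => (w i).rename σ) := by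
  induction n with
  | zero => rfl
  | succ m ih =>
    simp only [argsEqCon, List.ofFn_succ, List.foldr_cons, Con.rename]
    rw [← argsEqCon, ih (fun i => u i.succ) (fun i => w i.succ)]
    rfl

theorem Rule.fv_rename (σ : ℕ → ℕ) (r : Rule F arF Pc arP Prd arPrd) :
    (r.rename σ).fv = r.fv.image σ := by
  simp only [Rule.rename, Rule.fv, Tm.fv_rename, Con.fv_rename, Finset.image_union,
    Finset.biUnion_image]
  rfl

theorem Rule.IsVariant.rename {r r' : Rule F arF Pc arP Prd arPrd} (h : r.IsVariant r')
    (π : ℕ ≃ ℕ) : r.IsVariant (r'.rename π) := by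
  obtain ⟨ρ, rfl⟩ := h
  refine ⟨ρ.trans π, ?_⟩
  simp only [Rule.rename, Tm.rename_rename, Con.rename_rename]
  rfl

theorem Rule.hargs_fv_subset (r : Rule F arF Pc arP Prd arPrd) (i : Fin (arPrd r.hp)) :
    (r.hargs i).fv ⊆ r.fv :=
  (Finset.subset_biUnion_of_mem (fun i => (r.hargs i).fv) (Finset.mem_univ i)).trans
    (Finset.subset_union_left.trans Finset.subset_union_left)

theorem Rule.con_fv_subset (r : Rule F arF Pc arP Prd arPrd) : r.con.fv ⊆ r.fv :=
  Finset.subset_union_right.trans Finset.subset_union_left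

theorem Rule.bargs_fv_subset (r : Rule F arF Pc arP Prd arPrd) (i : Fin (arPrd r.bp)) :
    (r.bargs i).fv ⊆ r.fv :=
  (Finset.subset_biUnion_of_mem (fun i => (r.bargs i).fv) (Finset.mem_univ i)).trans
    Finset.subset_union_right

theorem Rule.headQuery_fv_subset (r : Rule F arF Pc arP Prd arPrd) : r.headQuery.fv ⊆ r.fv :=
  Finset.subset_union_left

theorem Query.args_fv_subset (S : Query F arF Pc arP Prd arPrd) (i : Fin (arPrd S.p)) :
    (S.args i).fv ⊆ S.fv :=
  (Finset.subset_biUnion_of_mem (fun i => (S.args i).fv) (Finset.mem_univ i)).trans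
    Finset.subset_union_left

theorem Query.con_fv_subset (S : Query F arF Pc arP Prd arPrd) : S.con.fv ⊆ S.fv :=
  Finset.subset_union_right

/-- Swap each `x ∈ A` with `x + M`, where `M` bounds `A ∪ B`. -/
theorem exists_perm_disjoint_image (A B : Finset ℕ) :
    ∃ π : Equiv.Perm ℕ, Disjoint (A.image π) B ∧ ∀ x ∈ B, x ∉ A → π x = x := by
  obtain ⟨M, hM⟩ := (A ∪ B).exists_nat_subset_range
  have hA : ∀ x ∈ A, x < M := fun x hx => Finset.mem_range.mp (hM (Finset.mem_union_left B hx))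
  have hB : ∀ x ∈ B, x < M := fun x hx => Finset.mem_range.mp (hM (Finset.mem_union_right A hx))
  let f : ℕ → ℕ := fun x => if x ∈ A then x + M else if M ≤ x ∧ x - M ∈ A then x - M else x
  have hf : Function.Involutive f := by
    intro x
    by_cases hx : x ∈ A
    · have : x + M ∉ A := fun h => by have := hA _ h; omega
      simp [f, hx, this]
    · by_cases h : M ≤ x ∧ x - M ∈ A
      · have : x - M + M = x := by omega
        simp [f, hx, h, this]
      · simp [f, hx, h]
  refine ⟨hf.toPerm f, Finset.disjoint_left.mpr ?_, fun x hxB hxA => ?_⟩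
  · simp only [Finset.mem_image, Function.Involutive.coe_toPerm]
    rintro _ ⟨x, hx, rfl⟩ hxB
    have := hB _ hxB
    simp only [f, hx, if_true] at this
    omega
  · have : ¬ (M ≤ x ∧ x - M ∈ A) := fun h => by have := hB _ hxB; omega
    simp [f, hxA, this]

theorem Query.projSet_rename (π : ℕ ≃ ℕ) (τ : ∀ p : Prd, Set (Fin (arPrd p)))
    (S : Query F arF Pc arP Prd arPrd) : (S.rename π).projSet I τ = S.projSet I τ := by
  ext a
  constructor
  · rintro ⟨v, hv, rfl⟩
    refine ⟨v ∘ π, (Con.sat_rename π v S.con).mp hv, ?_⟩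
    simp only [Query.rename, Tm.eval_rename]
    rfl
  · rintro ⟨v, hv, rfl⟩
    refine ⟨v ∘ π.symm, (Con.sat_rename _ _ _).mpr (by simpa [Function.comp_def] using hv), ?_⟩
    simp only [Query.rename, Function.comp_def, Tm.eval_rename, Equiv.symm_apply_apply]
    rfl

theorem Filt.deltaMoreGen_congr_left (Δ : Filt I Prd arPrd) {S T : Query F arF Pc arP Prd arPrd}
    (hp : T.p = S.p) (hproj : ∀ τ, T.projSet I τ = S.projSet I τ)
    (X : Query F arF Pc arP Prd arPrd) : Δ.DeltaMoreGen T X ↔ Δ.DeltaMoreGen S X := by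
  simp only [Filt.DeltaMoreGen, Filt.Satisfies, hproj]
  rw [hp]

theorem Filt.deltaMoreGen_rename_left (Δ : Filt I Prd arPrd) (π : ℕ ≃ ℕ)
    (T X : Query F arF Pc arP Prd arPrd) : Δ.DeltaMoreGen (T.rename π) X ↔ Δ.DeltaMoreGen T X :=
  Δ.deltaMoreGen_congr_left (S := T) (T := T.rename π) rfl (fun τ => Query.projSet_rename π τ T) X

theorem Filt.DeltaMoreGen.trans {Δ : Filt I Prd arPrd} {A B C : Query F arF Pc arP Prd arPrd}
    (hAB : Δ.DeltaMoreGen A B) (hBC : Δ.DeltaMoreGen B C) : Δ.DeltaMoreGen A C :=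
  ⟨hBC.1.trans hAB.1, hAB.2⟩

theorem StepWith.rename {r' : Rule F arF Pc arP Prd arPrd} {S T : Query F arF Pc arP Prd arPrd}
    (π : ℕ ≃ ℕ) (hfix : ∀ x ∈ S.fv, π x = x) (h : StepWith I r' S T) :
    StepWith I (r'.rename π) S (T.rename π) := by
  obtain ⟨hp, ⟨v, hv⟩, rfl⟩ := h
  have hargs : (fun i => (S.args i).rename π) = S.args :=
    funext fun i => Tm.rename_eq_self _ fun x hx => hfix x (S.args_fv_subset i hx)
  have hcon : S.con.rename π = S.con :=
    Con.rename_eq_self _ fun x hx => hfix x (S.con_fv_subset hx)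
  have hstep : stepCon (r'.rename π) S hp = (stepCon r' S hp).rename π := by
    simp only [stepCon, Con.rename, argsEqCon_rename, hargs, hcon]
    rfl
  refine ⟨hp, ⟨v ∘ π.symm, ?_⟩, by rw [hstep]; rfl⟩
  rw [hstep, Con.sat_rename]
  simpa [Function.comp_def] using hv

theorem Step.exists_fresh {r : Rule F arF Pc arP Prd arPrd} {S T : Query F arF Pc arP Prd arPrd}
    (h : Step I r S T) (U : Finset ℕ) :
    ∃ (r' : Rule F arF Pc arP Prd arPrd) (π : ℕ ≃ ℕ),
      r.IsVariant r' ∧ Disjoint r'.fv U ∧ StepWith I r' S (T.rename π) := by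
  obtain ⟨r', hvar, hdisj, hsw⟩ := h
  obtain ⟨π, hπ, hfix⟩ := exists_perm_disjoint_image r'.fv (U ∪ S.fv)
  refine ⟨r'.rename π, π, hvar.rename π, ?_, hsw.rename π fun x hx => ?_⟩
  · rw [Rule.fv_rename]
    exact hπ.mono_right Finset.subset_union_left
  · exact hfix x (Finset.mem_union_right U hx) (Finset.disjoint_right.mp hdisj hx)

theorem exists_step_headQuery (r : Rule F arF Pc arP Prd arPrd)
    (hc : ∃ v : ℕ → D, r.con.Sat I v) :
    ∃ T, Step I r r.headQuery T ∧ T.p = r.bodyQuery.p ∧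
      ∀ τ : ∀ p : Prd, Set (Fin (arPrd p)), T.projSet I τ = r.bodyQuery.projSet I τ := by
  obtain ⟨π, hπ, -⟩ := exists_perm_disjoint_image r.fv r.fv
  have hmoved : ∀ x ∈ r.fv, π x ∉ r.fv := fun x hx =>
    Finset.disjoint_left.mp hπ (Finset.mem_image_of_mem π hx)
  -- `glue v` evaluates both `r` and its variant `r.rename π` as `v` does `r`: their variables
  -- are disjoint
  let glue (v : ℕ → D) : ℕ → D := fun x => if x ∈ r.fv then v x else v (π.symm x)
  have glue_of_mem : ∀ v, ∀ x ∈ r.fv, glue v x = v x := fun v x hx => if_pos hx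
  have glue_apply : ∀ v, ∀ x ∈ r.fv, glue v (π x) = v x := fun v x hx => by
    simp [glue, hmoved x hx]
  have glue_sat : ∀ v, r.con.Sat I v → (stepCon (r.rename π) r.headQuery rfl).Sat I (glue v) := by
    intro v hv
    refine ⟨(argsEqCon_sat _ _ _).mpr fun i => ?_, ?_, ?_⟩
    · exact (Tm.eval_rename I.fn π (glue v) (r.hargs i)).trans <|
        (Tm.eval_congr I.fn _ (v := glue v ∘ π) (w := v) fun x hx =>
          glue_apply v x (r.hargs_fv_subset i hx)).trans
        (Tm.eval_congr I.fn _ (v := glue v) (w := v) fun x hx =>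
          glue_of_mem v x (r.hargs_fv_subset i hx)).symm
    · show (r.con.rename π).Sat I (glue v)
      rwa [Con.sat_rename,
        Con.sat_congr _ (v := glue v ∘ π) (w := v) fun x hx => glue_apply v x (r.con_fv_subset hx)]
    · show r.con.Sat I (glue v)
      rwa [Con.sat_congr _ (w := v) fun x hx => glue_of_mem v x (r.con_fv_subset hx)]
  obtain ⟨v₀, hv₀⟩ := hc
  refine ⟨_, ⟨r.rename π, ⟨π, rfl⟩, ?_, rfl, ⟨glue v₀, glue_sat v₀ hv₀⟩, rfl⟩, rfl, fun τ => ?_⟩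
  · rw [Rule.fv_rename]
    exact hπ.mono_right r.headQuery_fv_subset
  ext a
  constructor
  · rintro ⟨v, ⟨-, hv, -⟩, rfl⟩
    refine ⟨v ∘ π, (Con.sat_rename π v r.con).mp hv, ?_⟩
    simp only [Rule.rename, Tm.eval_rename]
    rfl
  · rintro ⟨v, hv, rfl⟩
    refine ⟨glue v, glue_sat v hv, ?_⟩
    simp only [Rule.rename, Rule.bodyQuery, Tm.eval_rename]
    congr 1
    funext i
    exact (Tm.eval_congr _ _ (v := glue v ∘ π) (w := v) fun x hx =>
      glue_apply v x (r.bargs_fv_subset _ hx)).symm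

theorem Loops.of_invariant {P : Set (Rule F arF Pc arP Prd arPrd)}
    {S₀ : Query F arF Pc arP Prd arPrd} (Inv : Query F arF Pc arP Prd arPrd → Prop)
    (h₀ : Inv S₀)
    (hstep : ∀ S, Inv S → ∀ U : Finset ℕ, ∃ r ∈ P, ∃ r' T,
      r.IsVariant r' ∧ Disjoint r'.fv U ∧ StepWith I r' S T ∧ Inv T) :
    Loops I P S₀ := by
  choose r hrP r' T hvar hdisj hsw hInv using hstep
  -- a state is the current query together with the variables used so far
  let next (x : {S // Inv S} × Finset ℕ) : {S // Inv S} × Finset ℕ :=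
    (⟨T x.1.1 x.1.2 x.2, hInv _ _ _⟩, x.2 ∪ (r' x.1.1 x.1.2 x.2).fv)
  let st (n : ℕ) := next^[n] (⟨S₀, h₀⟩, S₀.fv)
  have st_succ : ∀ n, st (n + 1) = next (st n) := fun n => Function.iterate_succ_apply' _ _ _
  have used_mono : Monotone fun n => (st n).2 :=
    monotone_nat_of_le_succ fun n => by rw [st_succ]; exact Finset.subset_union_left
  refine ⟨fun n => (st n).1.1, fun n => r' (st n).1.1 (st n).1.2 (st n).2, rfl, fun n =>
    ⟨⟨_, hrP _ _ _, hvar _ _ _⟩, ?_, fun m hm => ?_, by beta_reduce; rw [st_succ]; exact hsw _ _ _⟩⟩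
  · exact (hdisj _ _ _).mono_right (used_mono (Nat.zero_le n))
  · refine (hdisj _ _ _).mono_right (le_trans ?_ (used_mono (Nat.succ_le_of_lt hm)))
    beta_reduce
    rw [st_succ]
    exact Finset.subset_union_right

end CLP

open CLP in
/-- if `Δ` is DN for `r = H ← c ◇ B` (with `c` satisfiable) and
`⟨B|c⟩` is `Δ`-more general than `⟨H|c⟩`, then `⟨H|c⟩` loops w.r.t. `{r}`. -/
theorem stmt8 {F : Type} {arF : F → ℕ} {Pc : Type} {arP : Pc → ℕ}
    {Prd : Type} {arPrd : Prd → ℕ} {D : Type} {I : Interp F arF Pc arP D}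
    (r : Rule F arF Pc arP Prd arPrd) (hc : ∃ v : ℕ → D, r.con.Sat I v)
    (Δ : Filt I Prd arPrd) (hDN : Δ.DN r)
    (hmg : Δ.DeltaMoreGen r.bodyQuery r.headQuery) :
    Loops I {r} r.headQuery := by
  obtain ⟨T₀, hT₀, hT₀p, hT₀proj⟩ := exists_step_headQuery r hc
  have hT₀mg : Δ.DeltaMoreGen T₀ r.headQuery :=
    (Δ.deltaMoreGen_congr_left hT₀p hT₀proj _).mpr hmg
  have hstep : ∀ S, S = r.headQuery ∨ Δ.DeltaMoreGen S r.headQuery →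
      ∃ T, Step I r S T ∧ Δ.DeltaMoreGen T r.headQuery := by
    rintro S (rfl | hS)
    · exact ⟨T₀, hT₀, hT₀mg⟩
    · obtain ⟨T, hT, hTT₀⟩ := hDN _ _ hT₀ S hS
      exact ⟨T, hT, hTT₀.trans hT₀mg⟩
  refine Loops.of_invariant (fun S => S = r.headQuery ∨ Δ.DeltaMoreGen S r.headQuery)
    (Or.inl rfl) fun S hS U => ?_
  obtain ⟨T, hT, hTmg⟩ := hstep S hS
  obtain ⟨r', π, hvar, hdisj, hsw⟩ := hT.exists_fresh U
  exact ⟨r, rfl, r', _, hvar, hdisj, hsw, Or.inr ((Δ.deltaMoreGen_rename_left π T _).mpr hTmg)⟩
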